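/- Let n ≥ 1 and let s : Finset (Fin n) → ℝ satisfy s(∅) = 0. Then there exists a weight function w on n+1 vertices such that s(I) = δ_w(I) for every I ⊆ Fin n (with I viewed as a subset of Fin (n+1) via the natural embedding) if and only if the following three conditions hold: (1) for all distinct i, j ∈ Fin n, s({i}) + s({j}) ≥ s({i, j}); (2) for all i ∈ Fin n, s({i}) + s(Fin n) ≥ s(Fin n \ {i}); (3) for every V ⊆ Fin n with |V| ≥ 3, ∑_{I ⊆ V} (−1)^{|I|} s(I) = 0. -/

import Mathlib

/-!
Each edge `{p, q}` contributes to `δ_w(J)` a term depending only on whether `p` and `q` lie in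
`J`, so every alternating sum of `δ_w` over a set of at least three vertices vanishes. Conversely,
a set function whose alternating sums over all sets of size `≥ 3` vanish is determined, by strong
induction, by its values on sets of size `≤ 2`. Hence `s` is the cut function of the weights
`w i j = (s {i} + s {j} - s {i, j}) / 2` on the first `n` vertices, completed by
`w i (n+1) = s {i} - ∑ j, w i j` so that singletons match. Since `δ_w` is invariant under
complements, `2 w i j` and `2 w i (n+1)` are exactly the subadditivity and Araki–Lieb gaps, so
nonnegativity of the weights is equivalent to the two inequalities.
-/

/-- A weight function on `m` vertices: symmetric, nonnegative, vanishing on the diagonal. -/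
def IsWeight {m : ℕ} (w : Fin m → Fin m → ℝ) : Prop :=
  (∀ i j, w i j = w j i) ∧ (∀ i j, 0 ≤ w i j) ∧ ∀ i, w i i = 0

/-- The cut function of a weight function: `δ_w(I) = ∑_{i ∈ I} ∑_{j ∉ I} w i j`. -/
def cut {m : ℕ} (w : Fin m → Fin m → ℝ) (I : Finset (Fin m)) : ℝ :=
  ∑ i ∈ I, ∑ j ∈ Iᶜ, w i j

/-- The Bell vector `β_{ij}`: value `1` on subsets containing exactly one of `i, j`, else `0`. -/
def bell {m : ℕ} (i j : Fin m) (I : Finset (Fin m)) : ℝ :=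
  if Xor (i ∈ I) (j ∈ I) then 1 else 0

open Finset

section AlternatingSum

variable {α : Type*} [DecidableEq α]

lemma exists_mem_ne_ne_of_three_le_card {V : Finset α} (hV : 3 ≤ #V) (x y : α) :
    ∃ k ∈ V, k ≠ x ∧ k ≠ y := by
  have hpos : 0 < #(V \ {x, y}) := by
    have := le_card_sdiff {x, y} V
    have := card_le_two (a := x) (b := y)
    omega
  obtain ⟨k, hk⟩ := card_pos.mp hpos
  simp only [mem_sdiff, mem_insert, mem_singleton, not_or] at hk
  exact ⟨k, hk.1, hk.2⟩

lemma sum_powerset_neg_one_pow_mul_eq_zero {f : Finset α → ℝ} {V : Finset α} {k : α}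
    (hk : k ∈ V) (hf : ∀ I ⊆ V.erase k, f (insert k I) = f I) :
    ∑ I ∈ V.powerset, (-1 : ℝ) ^ #I * f I = 0 := by
  rw [← insert_erase hk, sum_powerset_insert (notMem_erase k V), ← sum_add_distrib]
  refine sum_eq_zero fun I hI => ?_
  have hIV := mem_powerset.mp hI
  have hkI : k ∉ I := fun h => notMem_erase k V (hIV h)
  rw [hf I hIV, card_insert_of_notMem hkI, pow_succ]
  ring

theorem eq_of_sum_powerset_neg_one_pow_mul_eq_zero {f g : Finset α → ℝ}
    (hf : ∀ V : Finset α, 3 ≤ #V → ∑ I ∈ V.powerset, (-1 : ℝ) ^ #I * f I = 0)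
    (hg : ∀ V : Finset α, 3 ≤ #V → ∑ I ∈ V.powerset, (-1 : ℝ) ^ #I * g I = 0)
    (hfg : ∀ I : Finset α, #I ≤ 2 → f I = g I) : f = g := by
  funext V
  induction V using Finset.strongInduction with
  | H V ih =>
  rcases le_or_gt #V 2 with hV | hV
  · exact hfg V hV
  have hsub : ∑ I ∈ V.powerset.erase V, (-1 : ℝ) ^ #I * f I
      = ∑ I ∈ V.powerset.erase V, (-1 : ℝ) ^ #I * g I :=
    sum_congr rfl fun I hI => by
      have hIV : I ⊂ V :=
        ssubset_of_subset_of_ne (mem_powerset.mp (mem_of_mem_erase hI)) (ne_of_mem_erase hI)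
      rw [ih I hIV]
  have hsum := (hf V hV).trans (hg V hV).symm
  rw [← sum_erase_add _ _ (mem_powerset_self V), ← sum_erase_add _ _ (mem_powerset_self V),
    hsub, add_right_inj] at hsum
  exact mul_left_cancel₀ (pow_ne_zero _ (by norm_num)) hsum

end AlternatingSum

section Cut

variable {m : ℕ}

lemma cut_eq_sum_ite (w : Fin m → Fin m → ℝ) (J : Finset (Fin m)) :
    cut w J = ∑ p, ∑ q, if p ∈ J ∧ q ∉ J then w p q else 0 := by
  simp only [ite_and, ← mem_compl, sum_ite_irrel, sum_const_zero, sum_ite_mem, univ_inter, cut]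

lemma sum_powerset_neg_one_pow_mul_cut_map_eq_zero {α : Type*} [DecidableEq α]
    (w : Fin m → Fin m → ℝ) (e : α ↪ Fin m) {V : Finset α} (hV : 3 ≤ #V) :
    ∑ I ∈ V.powerset, (-1 : ℝ) ^ #I * cut w (I.map e) = 0 := by
  simp only [cut_eq_sum_ite, mul_sum]
  rw [sum_comm]
  refine sum_eq_zero fun p _ => ?_
  rw [sum_comm]
  refine sum_eq_zero fun q _ => ?_
  obtain ⟨_, hk, hkp, hkq⟩ :=
    exists_mem_ne_ne_of_three_le_card (V := V.map e) (by rwa [card_map]) p q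
  obtain ⟨k, hkV, rfl⟩ := mem_map.mp hk
  refine sum_powerset_neg_one_pow_mul_eq_zero hkV fun I _ => ?_
  simp [map_insert, Ne.symm hkp, Ne.symm hkq]

lemma cut_compl {w : Fin m → Fin m → ℝ} (hw : ∀ i j, w i j = w j i) (J : Finset (Fin m)) :
    cut w Jᶜ = cut w J := by
  rw [cut, cut, compl_compl, sum_comm]
  simp only [hw]

lemma cut_union_add {w : Fin m → Fin m → ℝ} (hw : ∀ i j, w i j = w j i)
    {A B : Finset (Fin m)} (hAB : Disjoint A B) :
    cut w (A ∪ B) + 2 * ∑ i ∈ A, ∑ j ∈ B, w i j = cut w A + cut w B := by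
  have hsplit : ∀ {C D : Finset (Fin m)}, Disjoint C D → ∀ f : Fin m → ℝ,
      ∑ j ∈ Cᶜ, f j = ∑ j ∈ (C ∪ D)ᶜ, f j + ∑ j ∈ D, f j := fun hCD f => by
    rw [compl_union, ← sdiff_eq_inter_compl, sum_sdiff (subset_compl_iff_disjoint_left.mpr hCD)]
  have hBA : ∑ i ∈ B, ∑ j ∈ A, w i j = ∑ i ∈ A, ∑ j ∈ B, w i j := by
    rw [sum_comm]; simp only [hw]
  simp only [cut, sum_union hAB, hsplit hAB, hsplit hAB.symm, union_comm B A, sum_add_distrib, hBA]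
  ring

lemma cut_pair_add {w : Fin m → Fin m → ℝ} (hw : ∀ i j, w i j = w j i) {p q : Fin m}
    (hpq : p ≠ q) : cut w {p, q} + 2 * w p q = cut w {p} + cut w {q} := by
  simpa using cut_union_add hw (disjoint_singleton.mpr hpq)

lemma cut_singleton {w : Fin m → Fin m → ℝ} {p : Fin m} (hp : w p p = 0) :
    cut w {p} = ∑ q, w p q := by
  rw [cut, sum_singleton, ← sum_compl_add_sum {p}, sum_singleton, hp, add_zero]

end Cut

section FirstVertices

variable {n : ℕ}

lemma map_castSuccEmb_compl (I : Finset (Fin n)) :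
    (I.map Fin.castSuccEmb)ᶜ = insert (Fin.last n) (Iᶜ.map Fin.castSuccEmb) := by
  ext x
  induction x using Fin.lastCases with
  | last => simp [Fin.castSucc_ne_last]
  | cast a => simp [(Fin.castSucc_lt_last a).ne]

variable {w : Fin (n + 1) → Fin (n + 1) → ℝ} {s : Finset (Fin n) → ℝ}

lemma two_mul_weight_castSucc_castSucc (hw : ∀ p q, w p q = w q p)
    (hs : ∀ I, s I = cut w (I.map Fin.castSuccEmb)) {i j : Fin n} (hij : i ≠ j) :
    2 * w i.castSucc j.castSucc = s {i} + s {j} - s {i, j} := by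
  have := cut_pair_add hw (Fin.castSucc_injective n |>.ne hij)
  simp only [hs, map_singleton, map_insert, Fin.coe_castSuccEmb]
  linarith

lemma two_mul_weight_castSucc_last (hw : ∀ p q, w p q = w q p)
    (hs : ∀ I, s I = cut w (I.map Fin.castSuccEmb)) (i : Fin n) :
    2 * w i.castSucc (Fin.last n) = s {i} + s univ - s (univ \ {i}) := by
  have hU : s univ = cut w {Fin.last n} := by
    rw [hs, ← cut_compl hw, map_castSuccEmb_compl]; simp
  have hUi : s (univ \ {i}) = cut w {i.castSucc, Fin.last n} := by
    rw [hs, ← cut_compl hw, map_castSuccEmb_compl, ← compl_eq_univ_sdiff, compl_compl, pair_comm]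
    simp
  have := cut_pair_add hw (Fin.castSucc_lt_last i).ne
  rw [hs {i}, hU, hUi, map_singleton, Fin.coe_castSuccEmb]
  linarith

end FirstVertices

section Construction

noncomputable def pairWeight {α : Type*} [DecidableEq α] (s : Finset α → ℝ) (i j : α) : ℝ :=
  if i = j then 0 else (s {i} + s {j} - s {i, j}) / 2

lemma pairWeight_comm {α : Type*} [DecidableEq α] (s : Finset α → ℝ) (i j : α) :
    pairWeight s i j = pairWeight s j i := by
  unfold pairWeight
  rcases eq_or_ne i j with rfl | hij
  · rfl
  · rw [if_neg hij, if_neg hij.symm, pair_comm, add_comm (s {j})]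

lemma pairWeight_nonneg {α : Type*} [DecidableEq α] {s : Finset α → ℝ}
    (hs : ∀ i j, i ≠ j → s {i, j} ≤ s {i} + s {j}) (i j : α) : 0 ≤ pairWeight s i j := by
  unfold pairWeight
  split_ifs with hij
  · rfl
  · linarith [hs i j hij]

variable {n : ℕ}

def extendWeight (a : Fin n → Fin n → ℝ) (b : Fin n → ℝ) : Fin (n + 1) → Fin (n + 1) → ℝ :=
  Fin.lastCases (Fin.lastCases 0 b) fun i => Fin.lastCases (b i) (a i)

lemma extendWeight_comm {a : Fin n → Fin n → ℝ} (ha : ∀ i j, a i j = a j i) (b : Fin n → ℝ)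
    (p q : Fin (n + 1)) : extendWeight a b p q = extendWeight a b q p := by
  induction p using Fin.lastCases <;> induction q using Fin.lastCases <;> simp [extendWeight, ha]

lemma isWeight_extendWeight {a : Fin n → Fin n → ℝ} {b : Fin n → ℝ} (ha : IsWeight a)
    (hb : ∀ i, 0 ≤ b i) : IsWeight (extendWeight a b) := by
  obtain ⟨hsymm, hnonneg, hdiag⟩ := ha
  refine ⟨extendWeight_comm hsymm b, fun p q => ?_, fun p => ?_⟩
  · induction p using Fin.lastCases <;> induction q using Fin.lastCases <;>
      simp [extendWeight, hnonneg, hb]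
  · induction p using Fin.lastCases <;> simp [extendWeight, hdiag]

lemma sum_extendWeight_castSucc (a : Fin n → Fin n → ℝ) (b : Fin n → ℝ) (i : Fin n) :
    ∑ q, extendWeight a b i.castSucc q = ∑ j, a i j + b i := by
  simp [extendWeight, Fin.sum_univ_castSucc]

noncomputable def areaLawWeight (s : Finset (Fin n) → ℝ) : Fin (n + 1) → Fin (n + 1) → ℝ :=
  extendWeight (pairWeight s) fun i => s {i} - ∑ j, pairWeight s i j

lemma areaLawWeight_comm (s : Finset (Fin n) → ℝ) (p q : Fin (n + 1)) :
    areaLawWeight s p q = areaLawWeight s q p :=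
  extendWeight_comm (pairWeight_comm s) _ p q

lemma areaLawWeight_castSucc_castSucc (s : Finset (Fin n) → ℝ) (i j : Fin n) :
    areaLawWeight s i.castSucc j.castSucc = pairWeight s i j := by
  simp [areaLawWeight, extendWeight]

lemma areaLawWeight_castSucc_last (s : Finset (Fin n) → ℝ) (i : Fin n) :
    areaLawWeight s i.castSucc (Fin.last n) = s {i} - ∑ j, pairWeight s i j := by
  simp [areaLawWeight, extendWeight]

variable {s : Finset (Fin n) → ℝ}

lemma cut_areaLawWeight_singleton (i : Fin n) : cut (areaLawWeight s) {i.castSucc} = s {i} := by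
  rw [cut_singleton (by simp [areaLawWeight, extendWeight, pairWeight]), areaLawWeight,
    sum_extendWeight_castSucc]
  ring

lemma cut_map_areaLawWeight (hs : s ∅ = 0)
    (hmi : ∀ V : Finset (Fin n), 3 ≤ #V → ∑ I ∈ V.powerset, (-1 : ℝ) ^ #I * s I = 0)
    (I : Finset (Fin n)) : s I = cut (areaLawWeight s) (I.map Fin.castSuccEmb) := by
  refine congrFun (eq_of_sum_powerset_neg_one_pow_mul_eq_zero
    (g := fun I => cut (areaLawWeight s) (I.map Fin.castSuccEmb)) hmi
    (fun V hV => sum_powerset_neg_one_pow_mul_cut_map_eq_zero _ _ hV) fun I hI => ?_) I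
  obtain hI | hI | hI : #I = 0 ∨ #I = 1 ∨ #I = 2 := by omega
  · simp [card_eq_zero.mp hI, hs, cut]
  · obtain ⟨i, rfl⟩ := card_eq_one.mp hI
    simp [cut_areaLawWeight_singleton]
  · obtain ⟨i, j, hij, rfl⟩ := card_eq_two.mp hI
    have hpair := cut_pair_add (areaLawWeight_comm s) ((Fin.castSucc_injective n).ne hij)
    simp only [map_insert, map_singleton, Fin.coe_castSuccEmb] at hpair ⊢
    rw [cut_areaLawWeight_singleton, cut_areaLawWeight_singleton,
      areaLawWeight_castSucc_castSucc, pairWeight, if_neg hij] at hpair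
    linarith

lemma isWeight_areaLawWeight (hsub : ∀ i j : Fin n, i ≠ j → s {i, j} ≤ s {i} + s {j})
    (hal : ∀ i : Fin n, s (univ \ {i}) ≤ s {i} + s univ)
    (hcut : ∀ I, s I = cut (areaLawWeight s) (I.map Fin.castSuccEmb)) :
    IsWeight (areaLawWeight s) := by
  refine isWeight_extendWeight ⟨pairWeight_comm s, pairWeight_nonneg hsub, fun i => if_pos rfl⟩
    fun i => ?_
  have h := two_mul_weight_castSucc_last (areaLawWeight_comm s) hcut i
  rw [areaLawWeight_castSucc_last] at h
  linarith [hal i]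

end Construction

theorem areaLaw_entropy_cone_characterization_general (n : ℕ)
    (s : Finset (Fin n) → ℝ) (hs : s ∅ = 0) :
    (∃ w : Fin (n + 1) → Fin (n + 1) → ℝ, IsWeight w ∧
        ∀ I : Finset (Fin n), s I = cut w (I.map ⟨Fin.castSucc, Fin.castSucc_injective n⟩)) ↔
      ((∀ i j : Fin n, i ≠ j → s {i, j} ≤ s {i} + s {j}) ∧
       (∀ i : Fin n, s (Finset.univ \ {i}) ≤ s {i} + s Finset.univ) ∧
       ∀ V : Finset (Fin n), 3 ≤ V.card →
         ∑ I ∈ V.powerset, (-1 : ℝ) ^ I.card * s I = 0) := by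
  constructor
  · rintro ⟨w, ⟨hsymm, hnonneg, -⟩, hcut⟩
    refine ⟨fun i j hij => ?_, fun i => ?_, fun V hV => ?_⟩
    · linarith [two_mul_weight_castSucc_castSucc hsymm hcut hij, hnonneg i.castSucc j.castSucc]
    · linarith [two_mul_weight_castSucc_last hsymm hcut i, hnonneg i.castSucc (Fin.last n)]
    · simp only [hcut]
      exact sum_powerset_neg_one_pow_mul_cut_map_eq_zero w _ hV
  · rintro ⟨hsub, hal, hmi⟩
    have hcut := cut_map_areaLawWeight hs hmi
    exact ⟨areaLawWeight s, isWeight_areaLawWeight hsub hal hcut, hcut⟩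

/-- Main theorem. A function `s` on subsets of `Fin n` with `s ∅ = 0`
is the cut function of some weight function on `n+1` vertices (restricted to subsets of the
first `n` vertices) if and only if it satisfies subadditivity, the Araki–Lieb inequality,
and the multivariate information equalities. -/
theorem areaLaw_entropy_cone_characterization (n : ℕ) (hn : 1 ≤ n)
    (s : Finset (Fin n) → ℝ) (hs : s ∅ = 0) :
    (∃ w : Fin (n + 1) → Fin (n + 1) → ℝ, IsWeight w ∧
        ∀ I : Finset (Fin n), s I = cut w (I.map ⟨Fin.castSucc, Fin.castSucc_injective n⟩)) ↔
      ((∀ i j : Fin n, i ≠ j → s {i, j} ≤ s {i} + s {j}) ∧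
       (∀ i : Fin n, s (Finset.univ \ {i}) ≤ s {i} + s Finset.univ) ∧
       ∀ V : Finset (Fin n), 3 ≤ V.card →
         ∑ I ∈ V.powerset, (-1 : ℝ) ^ I.card * s I = 0) :=
  areaLaw_entropy_cone_characterization_general n s hs
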